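/- arXiv:1501.07385 — 4 statements merged into one kernel-verified Lean document; each statement's English description precedes it below -/
import Mathlib

section
/- (Injectivity of the Radon transform on Schwartz functions) Let N ≥ 2 and let f : ℝ^N → ℝ be a Schwartz function such that Rf(X,ξ) = 0 for every X ∈ ℝ and every unit vector ξ ∈ ℝ^N. Then f = 0 identically. -/
/-! Writing `x = s • ξ + y` with `y ⊥ ξ` splits Lebesgue measure as a product, so by Fubini the
Fourier transform of `f` at `t • ξ` is the one-dimensional Fourier transform of
`s ↦ Rf(s, ξ)` at `t` (Fourier slice theorem). If the Radon transform vanishes, the Fourier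
transform of `f` therefore vanishes on every line through the origin, and Fourier inversion
gives `f = 0`. -/

open MeasureTheory Metric
open scoped RealInnerProductSpace

noncomputable def radonTransform {N : ℕ} (f : EuclideanSpace ℝ (Fin N) → ℝ)
    (X : ℝ) (ξ : EuclideanSpace ℝ (Fin N)) : ℝ :=
  ∫ y : ((ℝ ∙ ξ)ᗮ : Submodule ℝ (EuclideanSpace ℝ (Fin N))),
    f (X • ξ + (y : EuclideanSpace ℝ (Fin N)))

noncomputable def sphereMeasure (N : ℕ) :
    Measure (sphere (0 : EuclideanSpace ℝ (Fin N)) 1) :=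
  ((volume : Measure (EuclideanSpace ℝ (Fin N))).toSphere Set.univ)⁻¹ •
    (volume : Measure (EuclideanSpace ℝ (Fin N))).toSphere

noncomputable def backProjection {N : ℕ}
    (g : ℝ → EuclideanSpace ℝ (Fin N) → ℝ) (x : EuclideanSpace ℝ (Fin N)) : ℝ :=
  ∫ ξ : sphere (0 : EuclideanSpace ℝ (Fin N)) 1,
    g ⟪(ξ : EuclideanSpace ℝ (Fin N)), x⟫ (ξ : EuclideanSpace ℝ (Fin N)) ∂(sphereMeasure N)

open Submodule
open scoped FourierTransform

section InnerProductSpace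

variable {E : Type*} [NormedAddCommGroup E] [InnerProductSpace ℝ E]

lemma exists_smul_eq_of_norm_eq_one [Nontrivial E] (v : E) :
    ∃ (t : ℝ) (ξ : E), ‖ξ‖ = 1 ∧ t • ξ = v := by
  rcases eq_or_ne v 0 with rfl | hv
  · obtain ⟨ξ, hξ⟩ := exists_norm_eq E zero_le_one
    exact ⟨0, ξ, hξ, zero_smul ℝ ξ⟩
  · exact ⟨‖v‖, ‖v‖⁻¹ • v, norm_smul_inv_norm hv, smul_inv_smul₀ (norm_ne_zero_iff.2 hv) v⟩

lemma inner_smul_add_orthogonal {ξ : E} (hξ : ‖ξ‖ = 1) (s t : ℝ) (y : (ℝ ∙ ξ)ᗮ) :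
    ⟪s • ξ + y, t • ξ⟫ = s * t := by
  have hy : ⟪(y : E), ξ⟫ = 0 := mem_orthogonal_singleton_iff_inner_left.1 y.2
  simp [inner_add_left, real_inner_smul_left, real_inner_smul_right, hy, hξ, mul_comm]

variable [FiniteDimensional ℝ E] [MeasurableSpace E] [BorelSpace E]

noncomputable def lineProdOrthogonalEquiv (ξ : E) (hξ : ‖ξ‖ = 1) : ℝ × (ℝ ∙ ξ)ᗮ ≃ᵐ E :=
  ((LinearIsometryEquiv.toSpanUnitSingleton ξ hξ).toMeasurableEquiv.prodCongr
    (MeasurableEquiv.refl _)).trans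
    ((MeasurableEquiv.toLp 2 _).trans (ℝ ∙ ξ).orthogonalDecomposition.symm.toMeasurableEquiv)

@[simp] lemma lineProdOrthogonalEquiv_apply (ξ : E) (hξ : ‖ξ‖ = 1) (p : ℝ × (ℝ ∙ ξ)ᗮ) :
    lineProdOrthogonalEquiv ξ hξ p = p.1 • ξ + p.2 :=
  rfl

lemma measurePreserving_lineProdOrthogonalEquiv (ξ : E) (hξ : ‖ξ‖ = 1) :
    MeasurePreserving (lineProdOrthogonalEquiv ξ hξ) :=
  (ℝ ∙ ξ).orthogonalDecomposition.symm.measurePreserving.comp <|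
    (WithLp.volume_preserving_toLp _ _).comp <|
      (LinearIsometryEquiv.toSpanUnitSingleton ξ hξ).measurePreserving.prod (.id _)

variable {F : Type*} [NormedAddCommGroup F] [NormedSpace ℂ F]

theorem fourier_smul_eq_fourier_integral_orthogonal {f : E → F} (hf : Integrable f) {ξ : E}
    (hξ : ‖ξ‖ = 1) (t : ℝ) :
    𝓕 f (t • ξ) = 𝓕 (fun s : ℝ ↦ ∫ y : (ℝ ∙ ξ)ᗮ, f (s • ξ + y)) t := by
  set e := lineProdOrthogonalEquiv ξ hξ
  have he := measurePreserving_lineProdOrthogonalEquiv ξ hξ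
  have hint : Integrable fun p : ℝ × (ℝ ∙ ξ)ᗮ ↦ 𝐞 (-(p.1 * t)) • f (p.1 • ξ + p.2) := by
    have := (he.integrable_comp_emb e.measurableEmbedding).2
      ((Real.fourierIntegral_convergent_iff (t • ξ)).2 hf)
    simpa [Function.comp_def, e, inner_smul_add_orthogonal hξ] using this
  calc 𝓕 f (t • ξ) = ∫ x, 𝐞 (-⟪x, t • ξ⟫) • f x := Real.fourier_eq f _
    _ = ∫ p : ℝ × (ℝ ∙ ξ)ᗮ, 𝐞 (-(p.1 * t)) • f (p.1 • ξ + p.2) := by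
      simp [← he.integral_comp', inner_smul_add_orthogonal hξ]
    _ = ∫ s : ℝ, 𝐞 (-(s * t)) • ∫ y : (ℝ ∙ ξ)ᗮ, f (s • ξ + y) := by
      rw [Measure.volume_eq_prod, integral_prod _ hint]
      simp only [Circle.smul_def, integral_smul]
    _ = 𝓕 (fun s : ℝ ↦ ∫ y : (ℝ ∙ ξ)ᗮ, f (s • ξ + y)) t := (Real.fourier_real_eq _ t).symm

theorem Continuous.eq_zero_of_fourier_eq_zero [CompleteSpace F] {f : E → F} (hc : Continuous f)
    (hf : Integrable f) (h : 𝓕 f = 0) : f = 0 := by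
  have hinv := hc.fourierInv_fourier_eq hf (by rw [h]; exact integrable_zero _ _ _)
  rw [← hinv, h]
  ext
  simp [Real.fourierInv_eq]

end InnerProductSpace

theorem radon_injective_on_schwartz (N : ℕ) (hN : 2 ≤ N)
    (f : SchwartzMap (EuclideanSpace ℝ (Fin N)) ℝ)
    (h : ∀ (X : ℝ) (ξ : EuclideanSpace ℝ (Fin N)), ‖ξ‖ = 1 →
      radonTransform (fun y => f y) X ξ = 0) :
    ∀ x : EuclideanSpace ℝ (Fin N), f x = 0 := by
  have : Nonempty (Fin N) := ⟨⟨0, by omega⟩⟩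
  have hslice (ξ : EuclideanSpace ℝ (Fin N)) (hξ : ‖ξ‖ = 1) :
      (fun s : ℝ ↦ ∫ y : (ℝ ∙ ξ)ᗮ, (f (s • ξ + y) : ℂ)) = 0 := by
    ext s
    rw [Pi.zero_apply, integral_complex_ofReal]
    exact_mod_cast h s ξ hξ
  have hfourier : 𝓕 (fun x ↦ (f x : ℂ)) = 0 := by
    ext v
    obtain ⟨t, ξ, hξ, rfl⟩ := exists_smul_eq_of_norm_eq_one v
    rw [fourier_smul_eq_fourier_integral_orthogonal f.integrable.ofReal hξ, hslice ξ hξ]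
    simp [Real.fourier_real_eq]
  have hg := (Complex.continuous_ofReal.comp f.continuous).eq_zero_of_fourier_eq_zero
    f.integrable.ofReal hfourier
  exact fun x ↦ Complex.ofReal_eq_zero.1 (congrFun hg x)
end

section
/- (Helgason moment conditions) Let N ≥ 2, let f : ℝ^N → ℝ be a Schwartz function, and let k ≥ 0 be an integer. Define Q : ℝ^N → ℝ by Q(ξ) = ∫_{ℝ^N} ⟨ξ,x⟩^k f(x) dx. Then (i) for every unit vector ξ ∈ ℝ^N, ∫_ℝ X^k Rf(X,ξ) dX = Q(ξ), and (ii) Q is homogeneous of degree k, i.e. Q(tξ) = t^k Q(ξ) for all t ∈ ℝ and ξ ∈ ℝ^N; in particular ξ ↦ ∫_ℝ X^k Rf(X,ξ) dX is the restriction to the unit sphere of a homogeneous polynomial of degree k in ξ₁,…,ξ_N. -/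
open MeasureTheory Metric
open scoped RealInnerProductSpace

/-! For a unit vector `ξ`, the map `(X, y) ↦ X • ξ + y` from `ℝ × ξᗮ` to the whole space is
measure preserving, since it is a linear isometry from the `L²` product. Fubini along it slices
`∫ ⟪ξ, x⟫ ^ k * f x` into the hyperplane integrals `Rf(X, ξ)`, on each of which `⟪ξ, x⟫ = X`.
Homogeneity of `Q` is just linearity of the inner product in `ξ`. -/

section Slicing

variable {E : Type*} [NormedAddCommGroup E] [InnerProductSpace ℝ E]

theorem inner_smul_add_of_mem_orthogonal_singleton {ξ y : E} (hξ : ‖ξ‖ = 1)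
    (hy : y ∈ (ℝ ∙ ξ)ᗮ) (X : ℝ) : ⟪ξ, X • ξ + y⟫ = X := by
  rw [inner_add_right, real_inner_smul_right, real_inner_self_eq_norm_sq, hξ,
    Submodule.mem_orthogonal_singleton_iff_inner_right.1 hy]
  ring

variable [FiniteDimensional ℝ E] [MeasurableSpace E] [BorelSpace E]

theorem Submodule.measurePreserving_add_orthogonal (K : Submodule ℝ E) :
    MeasurePreserving (fun p : K × Kᗮ => (p.1 : E) + p.2) := by
  convert K.orthogonalDecomposition.symm.measurePreserving.comp
    (WithLp.volume_preserving_toLp K Kᗮ) using 1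
  ext p
  simp

theorem measurePreserving_smul_add_orthogonal {ξ : E} (hξ : ‖ξ‖ = 1) :
    MeasurePreserving (fun p : ℝ × (ℝ ∙ ξ)ᗮ => p.1 • ξ + (p.2 : E)) :=
  (ℝ ∙ ξ).measurePreserving_add_orthogonal.comp
    ((LinearIsometryEquiv.toSpanUnitSingleton ξ hξ).measurePreserving.prod
      (MeasurePreserving.id _))

theorem integral_eq_integral_integral_smul_add_orthogonal {F : Type*} [NormedAddCommGroup F]
    [NormedSpace ℝ F] {ξ : E} (hξ : ‖ξ‖ = 1) {g : E → F} (hg : Integrable g) :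
    ∫ x, g x = ∫ X : ℝ, ∫ y : (ℝ ∙ ξ)ᗮ, g (X • ξ + y) := by
  have hφ := measurePreserving_smul_add_orthogonal hξ
  rw [← hφ.map_eq, integral_map hφ.measurable.aemeasurable (hφ.map_eq ▸ hg.1),
    Measure.volume_eq_prod, integral_prod]
  exact (hφ.integrable_comp hg.1).2 hg

theorem SchwartzMap.integrable_inner_pow_mul (f : SchwartzMap E ℝ) (ξ : E) (k : ℕ) :
    Integrable fun x => ⟪ξ, x⟫ ^ k * f x := by
  have hg : (fun x : E => ⟪ξ, x⟫ ^ k).HasTemperateGrowth :=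
    (Function.hasTemperateGrowth_inner_right ξ).pow k
  have h := (SchwartzMap.smulLeftCLM ℝ (fun x : E => ⟪ξ, x⟫ ^ k) f).integrable (μ := volume)
  simpa only [SchwartzMap.smulLeftCLM_apply hg, smul_eq_mul] using h

end Slicing

theorem integral_mul_radonTransform {N : ℕ} {ξ : EuclideanSpace ℝ (Fin N)} (hξ : ‖ξ‖ = 1)
    {φ : ℝ → ℝ} {g : EuclideanSpace ℝ (Fin N) → ℝ}
    (hg : Integrable fun x => φ ⟪ξ, x⟫ * g x) :
    ∫ X, φ X * radonTransform g X ξ = ∫ x, φ ⟪ξ, x⟫ * g x := by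
  rw [integral_eq_integral_integral_smul_add_orthogonal hξ hg]
  congr 1 with X
  rw [radonTransform, ← integral_const_mul]
  congr 1 with y
  rw [inner_smul_add_of_mem_orthogonal_singleton hξ y.2]

theorem helgason_moment_conditions_general (N : ℕ)
    (f : SchwartzMap (EuclideanSpace ℝ (Fin N)) ℝ) (k : ℕ)
    (Q : EuclideanSpace ℝ (Fin N) → ℝ)
    (hQ : Q = fun ξ => ∫ x : EuclideanSpace ℝ (Fin N), (⟪ξ, x⟫ : ℝ) ^ k * f x) :
    (∀ ξ : EuclideanSpace ℝ (Fin N), ‖ξ‖ = 1 →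
        ∫ X : ℝ, X ^ k * radonTransform (fun y => f y) X ξ = Q ξ) ∧
      (∀ (t : ℝ) (ξ : EuclideanSpace ℝ (Fin N)), Q (t • ξ) = t ^ k * Q ξ) := by
  subst hQ
  refine ⟨fun ξ hξ => integral_mul_radonTransform hξ (f.integrable_inner_pow_mul ξ k),
    fun t ξ => ?_⟩
  simp only [real_inner_smul_left, mul_pow, mul_assoc]
  exact integral_const_mul _ _

theorem helgason_moment_conditions (N : ℕ) (hN : 2 ≤ N)
    (f : SchwartzMap (EuclideanSpace ℝ (Fin N)) ℝ) (k : ℕ)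
    (Q : EuclideanSpace ℝ (Fin N) → ℝ)
    (hQ : Q = fun ξ => ∫ x : EuclideanSpace ℝ (Fin N), (⟪ξ, x⟫ : ℝ) ^ k * f x) :
    (∀ ξ : EuclideanSpace ℝ (Fin N), ‖ξ‖ = 1 →
        ∫ X : ℝ, X ^ k * radonTransform (fun y => f y) X ξ = Q ξ) ∧
      (∀ (t : ℝ) (ξ : EuclideanSpace ℝ (Fin N)), Q (t • ξ) = t ^ k * Q ξ) :=
  helgason_moment_conditions_general N f k Q hQ
end

section
/- (L² continuity of the Radon transform on functions supported in the unit ball) Let N ≥ 2. There exists a constant C_N > 0, depending only on N, such that for every continuous function f : ℝ^N → ℝ with support contained in the closed unit ball, ∫_{S^{N−1}} ∫_ℝ |Rf(X,ξ)|² dX dσ(ξ) ≤ C_N ∫_{ℝ^N} |f(x)|² dx, where σ is the rotation-invariant probability measure on S^{N−1}. -/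
open MeasureTheory Metric
open scoped RealInnerProductSpace

open Module

/-!
For a unit vector `ξ`, `(X, y) ↦ X • ξ + y` is a linear isometry from the `L²` product
`ℝ × ξᗮ` onto `ℝᴺ`, hence measure preserving. If `f` vanishes outside the unit ball, then
`y ↦ f (X • ξ + y)` vanishes outside the unit ball `B` of `ξᗮ`, so Cauchy–Schwarz on `B` gives
`|Rf(X,ξ)|² ≤ |B| ∫_{ξᗮ} |f (X • ξ + y)|² dy`. Integrating in `X` (Fubini) yields
`∫ |Rf(X,ξ)|² dX ≤ |B| ‖f‖₂²` uniformly in `ξ`, since `|B|` is the volume of the unit ball of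
`ℝᴺ⁻¹`; averaging over the sphere with the probability measure `σ` keeps the bound, so
`C_N = |B^{N-1}|` works.
-/

section
variable {α β : Type*} [MeasurableSpace α] [MeasurableSpace β]

lemma sq_integral_le_measureReal_mul_integral_sq {μ : Measure α} {s : Set α} {g : α → ℝ}
    (hg : MemLp g 2 μ) (hs : μ s ≠ ⊤) (hgs : ∀ x ∉ s, g x = 0) :
    (∫ x, g x ∂μ) ^ 2 ≤ μ.real s * ∫ x, g x ^ 2 ∂μ := by
  have hg2s : ∀ x ∉ s, g x ^ 2 = 0 := fun x hx => by simp [hgs x hx]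
  rw [← setIntegral_eq_integral_of_forall_compl_eq_zero hgs,
    ← setIntegral_eq_integral_of_forall_compl_eq_zero hg2s]
  rcases eq_or_ne (μ s) 0 with h0 | h0
  · simp [Measure.restrict_eq_zero.2 h0, measureReal_def, h0]
  have : IsFiniteMeasure (μ.restrict s) := isFiniteMeasure_restrict.2 hs
  have hm : 0 < μ.real s := ENNReal.toReal_pos h0 hs
  -- Jensen's inequality for the square, on the normalised restriction of `μ` to `s`
  have hJensen := (even_two.convexOn_pow (𝕜 := ℝ)).map_set_average_le
    (continuous_pow 2).continuousOn isClosed_univ h0 hs (ae_of_all _ fun _ => trivial)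
    ((hg.restrict s).integrable one_le_two) hg.integrable_sq.integrableOn
  simp only [setAverage_eq, smul_eq_mul, mul_pow, inv_pow] at hJensen
  field_simp at hJensen
  exact hJensen

lemma integral_sq_integral_le_measureReal_mul {μ : Measure α} {ν : Measure β} [SFinite μ]
    [SFinite ν] {F : α × β → ℝ} (hF : MemLp F 2 (μ.prod ν)) {s : Set β} (hs : ν s ≠ ⊤)
    (hFs : ∀ x, ∀ y ∉ s, F (x, y) = 0) :
    ∫ x, (∫ y, F (x, y) ∂ν) ^ 2 ∂μ ≤ ν.real s * ∫ p, F p ^ 2 ∂(μ.prod ν) := by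
  have hF2 := hF.integrable_sq
  have hslice : ∀ᵐ x ∂μ, MemLp (fun y => F (x, y)) 2 ν := by
    filter_upwards [hF.aestronglyMeasurable.prodMk_left, hF2.prod_right_ae] with x hm hi
    exact (memLp_two_iff_integrable_sq hm).2 hi
  calc ∫ x, (∫ y, F (x, y) ∂ν) ^ 2 ∂μ ≤ ∫ x, ν.real s * ∫ y, F (x, y) ^ 2 ∂ν ∂μ :=
        integral_mono_of_nonneg (ae_of_all _ fun _ => sq_nonneg _)
          (hF2.integral_prod_left.const_mul _)
          (hslice.mono fun x hx => sq_integral_le_measureReal_mul_integral_sq hx hs (hFs x))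
    _ = ν.real s * ∫ p, F p ^ 2 ∂(μ.prod ν) := by rw [integral_const_mul, integral_prod _ hF2]

end

section
variable {E : Type*} [NormedAddCommGroup E] [InnerProductSpace ℝ E] {ξ : E}

lemma norm_prod_le_norm_smul_add_of_mem_orthogonal (hξ : ‖ξ‖ = 1) (t : ℝ) (y : (ℝ ∙ ξ)ᗮ) :
    ‖(t, y)‖ ≤ ‖t • ξ + (y : E)‖ := by
  have hy : ⟪ξ, (y : E)⟫ = 0 := Submodule.mem_orthogonal_singleton_iff_inner_right.1 y.2
  have hpyth : ‖t • ξ + (y : E)‖ ^ 2 = ‖t‖ ^ 2 + ‖y‖ ^ 2 := by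
    rw [norm_add_sq_real, real_inner_smul_left, hy, norm_smul, hξ]
    simp
  rw [Prod.norm_mk]
  exact max_le (by nlinarith [norm_nonneg t, norm_nonneg (t • ξ + (y : E))])
    (by nlinarith [norm_nonneg y, norm_nonneg (t • ξ + (y : E))])

variable [FiniteDimensional ℝ E]

noncomputable def prodOrthogonalSpanSingletonEquiv (hξ : ‖ξ‖ = 1) :
    WithLp 2 (ℝ × (ℝ ∙ ξ)ᗮ) ≃ₗᵢ[ℝ] E :=
  (LinearIsometryEquiv.withLpProdCongr 2 (LinearIsometryEquiv.toSpanUnitSingleton ξ hξ)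
    (LinearIsometryEquiv.refl ℝ _)).trans (ℝ ∙ ξ).orthogonalDecomposition.symm

variable [MeasurableSpace E] [BorelSpace E]

noncomputable def prodOrthogonalSpanSingletonMeasurableEquiv (hξ : ‖ξ‖ = 1) :
    (ℝ × (ℝ ∙ ξ)ᗮ) ≃ᵐ E :=
  (MeasurableEquiv.toLp 2 _).trans (prodOrthogonalSpanSingletonEquiv hξ).toMeasurableEquiv

@[simp]
lemma prodOrthogonalSpanSingletonMeasurableEquiv_apply (hξ : ‖ξ‖ = 1) (p : ℝ × (ℝ ∙ ξ)ᗮ) :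
    prodOrthogonalSpanSingletonMeasurableEquiv hξ p = p.1 • ξ + p.2 := by
  simp [prodOrthogonalSpanSingletonMeasurableEquiv, prodOrthogonalSpanSingletonEquiv]

lemma measurePreserving_prodOrthogonalSpanSingletonMeasurableEquiv (hξ : ‖ξ‖ = 1) :
    MeasurePreserving (prodOrthogonalSpanSingletonMeasurableEquiv hξ) :=
  (prodOrthogonalSpanSingletonEquiv hξ).measurePreserving.comp (WithLp.volume_preserving_toLp ℝ _)

lemma measureReal_closedBall_zero_eq_of_finrank_eq {F : Type*} [NormedAddCommGroup F]
    [InnerProductSpace ℝ F] [FiniteDimensional ℝ F] [MeasurableSpace F] [BorelSpace F]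
    (h : finrank ℝ E = finrank ℝ F) (r : ℝ) :
    volume.real (closedBall (0 : E) r) = volume.real (closedBall (0 : F) r) := by
  let e : E ≃ₗᵢ[ℝ] F := (stdOrthonormalBasis ℝ E).repr.trans
    ((stdOrthonormalBasis ℝ F).reindex (finCongr h.symm)).repr.symm
  rw [← e.measurePreserving.measureReal_preimage measurableSet_closedBall.nullMeasurableSet,
    e.preimage_closedBall, map_zero]

theorem integral_sq_integral_orthogonal_le (hξ : ‖ξ‖ = 1) {f : E → ℝ} (hf : Continuous f)
    (hsupp : Function.support f ⊆ closedBall 0 1) :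
    ∫ X : ℝ, (∫ y : (ℝ ∙ ξ)ᗮ, f (X • ξ + y)) ^ 2 ≤
      volume.real (closedBall (0 : (ℝ ∙ ξ)ᗮ) 1) * ∫ x, f x ^ 2 := by
  set F : ℝ × (ℝ ∙ ξ)ᗮ → ℝ := fun p => f (p.1 • ξ + p.2)
  have hsuppF : Function.support F ⊆ closedBall 0 1 := fun p hp =>
    mem_closedBall_zero_iff.2 <|
      (norm_prod_le_norm_smul_add_of_mem_orthogonal hξ p.1 p.2).trans
        (mem_closedBall_zero_iff.1 (hsupp hp))
  have hF : MemLp F 2 (volume.prod volume) :=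
    Continuous.memLp_of_hasCompactSupport (by fun_prop)
      (.of_support_subset_isCompact (isCompact_closedBall 0 1) hsuppF)
  have hFs : ∀ X, ∀ y ∉ closedBall (0 : (ℝ ∙ ξ)ᗮ) 1, F (X, y) = 0 := fun X y hy => by
    by_contra hXy
    exact hy (mem_closedBall_zero_iff.2 ((norm_snd_le (X, y)).trans
      (mem_closedBall_zero_iff.1 (hsuppF hXy))))
  calc ∫ X : ℝ, (∫ y : (ℝ ∙ ξ)ᗮ, F (X, y)) ^ 2
      ≤ volume.real (closedBall (0 : (ℝ ∙ ξ)ᗮ) 1) * ∫ p, F p ^ 2 ∂(volume.prod volume) :=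
        integral_sq_integral_le_measureReal_mul hF measure_closedBall_lt_top.ne hFs
    _ = volume.real (closedBall (0 : (ℝ ∙ ξ)ᗮ) 1) * ∫ x, f x ^ 2 := by
      rw [← Measure.volume_eq_prod, ← (measurePreserving_prodOrthogonalSpanSingletonMeasurableEquiv
        hξ).integral_comp' (fun x => f x ^ 2)]
      simp [F]

end

theorem integral_sq_radonTransform_le {n : ℕ} {ξ : EuclideanSpace ℝ (Fin (n + 1))} (hξ : ‖ξ‖ = 1)
    {f : EuclideanSpace ℝ (Fin (n + 1)) → ℝ} (hf : Continuous f)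
    (hsupp : Function.support f ⊆ closedBall 0 1) :
    ∫ X, |radonTransform f X ξ| ^ 2 ≤
      volume.real (closedBall (0 : EuclideanSpace ℝ (Fin n)) 1) * ∫ x, |f x| ^ 2 := by
  have : Fact (finrank ℝ (EuclideanSpace ℝ (Fin (n + 1))) = n + 1) := ⟨finrank_euclideanSpace_fin⟩
  have hrank : finrank ℝ (ℝ ∙ ξ)ᗮ = finrank ℝ (EuclideanSpace ℝ (Fin n)) := by
    rw [Submodule.finrank_orthogonal_span_singleton (n := n) (norm_ne_zero_iff.1 (by simp [hξ])),
      finrank_euclideanSpace_fin]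
  simpa only [radonTransform, sq_abs, measureReal_closedBall_zero_eq_of_finrank_eq hrank] using
    integral_sq_integral_orthogonal_le hξ hf hsupp

lemma isProbabilityMeasure_sphereMeasure {N : ℕ} (hN : N ≠ 0) :
    IsProbabilityMeasure (sphereMeasure N) := by
  constructor
  rw [sphereMeasure, Measure.smul_apply, smul_eq_mul]
  refine ENNReal.inv_mul_cancel ?_ (measure_ne_top _ _)
  rwa [Ne, Measure.measure_univ_eq_zero, Measure.toSphere_eq_zero_iff_finrank,
    finrank_euclideanSpace_fin]

theorem radon_L2_continuity_unit_ball (N : ℕ) (hN : 2 ≤ N) :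
    ∃ C : ℝ, 0 < C ∧
      ∀ f : EuclideanSpace ℝ (Fin N) → ℝ, Continuous f →
        Function.support f ⊆ closedBall (0 : EuclideanSpace ℝ (Fin N)) 1 →
        (∫ ξ : sphere (0 : EuclideanSpace ℝ (Fin N)) 1,
            (∫ X : ℝ, |radonTransform f X (ξ : EuclideanSpace ℝ (Fin N))| ^ 2)
              ∂(sphereMeasure N))
          ≤ C * ∫ x : EuclideanSpace ℝ (Fin N), |f x| ^ 2 := by
  obtain ⟨n, rfl⟩ : ∃ n, N = n + 1 := ⟨N - 1, by omega⟩
  have := isProbabilityMeasure_sphereMeasure n.succ_ne_zero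
  set C := volume.real (closedBall (0 : EuclideanSpace ℝ (Fin n)) 1)
  have hC : 0 < C :=
    ENNReal.toReal_pos (measure_closedBall_pos _ _ one_pos).ne' measure_closedBall_lt_top.ne
  refine ⟨C, hC, fun f hf hsupp => ?_⟩
  calc _ ≤ ∫ _ : sphere (0 : EuclideanSpace ℝ (Fin (n + 1))) 1,
        (C * ∫ x, |f x| ^ 2) ∂sphereMeasure (n + 1) :=
        integral_mono_of_nonneg (ae_of_all _ fun _ => integral_nonneg fun _ => by positivity)
          (integrable_const _)
          (ae_of_all _ fun ξ => integral_sq_radonTransform_le (norm_eq_of_mem_sphere ξ) hf hsupp)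
    _ = C * ∫ x, |f x| ^ 2 := by simp
end

section
/- (Smith–Solomon–Wagner, uniqueness part) Let f : ℝ² → ℝ be a continuous function with compact support, and let S ⊆ S¹ be an infinite set of unit vectors. If Rf(X,ξ) = 0 for every X ∈ ℝ and every ξ ∈ S, then f = 0 identically; i.e., a compactly supported function in the plane is uniquely determined by any infinite set of its tomograms. -/
open MeasureTheory Metric
open scoped RealInnerProductSpace

/-!
Slicing the plane by the lines orthogonal to `ξ` gives
`∫ ⟪ξ, x⟫ ^ k * f x = ∫ s ^ k * Rf(s, ξ) ds`, so for each `k` the binary form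
`ξ ↦ ∫ ⟪ξ, x⟫ ^ k * f x`, whose coefficients are binomial coefficients times the moments of
order `k` of `f`, vanishes on `S`. A nonzero binary form vanishes on only finitely many lines
through the origin, hence at only finitely many unit vectors, so every moment of `f` vanishes.
Then `f` is orthogonal to all polynomials, in particular (Stone–Weierstrass) to uniform
approximations of itself on its support; hence `∫ f ^ 2 = 0` and `f = 0`.
-/

open Finset

theorem integral_eq_integral_integral_orthogonal {E : Type*} [NormedAddCommGroup E]
    [InnerProductSpace ℝ E] [FiniteDimensional ℝ E] [MeasurableSpace E] [BorelSpace E]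
    {ξ : E} (hξ : ‖ξ‖ = 1) {g : E → ℝ} (hg : Integrable g) :
    ∫ x, g x = ∫ s : ℝ, ∫ y : (ℝ ∙ ξ)ᗮ, g (s • ξ + y) := by
  set K := ℝ ∙ ξ
  let Φ : ℝ × Kᗮ ≃ᵐ E :=
    ((LinearIsometryEquiv.toSpanUnitSingleton ξ hξ).toMeasurableEquiv.prodCongr
      (MeasurableEquiv.refl _)).trans
    ((MeasurableEquiv.toLp 2 (K × Kᗮ)).trans K.orthogonalDecomposition.symm.toMeasurableEquiv)
  have hΦ : MeasurePreserving Φ :=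
    ((LinearIsometryEquiv.toSpanUnitSingleton ξ hξ).measurePreserving.prod
      (MeasurePreserving.id (volume : Measure Kᗮ))).trans
    ((WithLp.volume_preserving_toLp K Kᗮ).trans K.orthogonalDecomposition.symm.measurePreserving)
  rw [← hΦ.integral_comp' g, Measure.volume_eq_prod]
  exact integral_prod _ ((hΦ.integrable_comp_emb Φ.measurableEmbedding).2 hg)

theorem integral_comp_inner_mul_eq_integral_mul_radonTransform {N : ℕ}
    {f : EuclideanSpace ℝ (Fin N) → ℝ} (hf : Continuous f) (hsupp : HasCompactSupport f)
    {ξ : EuclideanSpace ℝ (Fin N)} (hξ : ‖ξ‖ = 1) {φ : ℝ → ℝ} (hφ : Continuous φ) :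
    ∫ x, φ ⟪ξ, x⟫ * f x = ∫ s, φ s * radonTransform f s ξ := by
  have hint : Integrable fun x => φ ⟪ξ, x⟫ * f x :=
    ((hφ.comp (continuous_const.inner continuous_id)).mul hf).integrable_of_hasCompactSupport
      hsupp.mul_left
  rw [integral_eq_integral_integral_orthogonal hξ hint]
  refine integral_congr_ae (.of_forall fun s => ?_)
  have hinner (y : (ℝ ∙ ξ)ᗮ) : ⟪ξ, s • ξ + y⟫ = s := by
    rw [inner_add_right, real_inner_smul_right, real_inner_self_eq_norm_sq, hξ,
      Submodule.inner_right_of_mem_orthogonal (Submodule.mem_span_singleton_self ξ) y.2]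
    ring
  simp only [hinner, radonTransform, integral_const_mul]

theorem integral_inner_pow_mul_eq_sum_antidiagonal {f : EuclideanSpace ℝ (Fin 2) → ℝ}
    (hf : Continuous f) (hsupp : HasCompactSupport f) (ξ : EuclideanSpace ℝ (Fin 2)) (k : ℕ) :
    ∫ x, ⟪ξ, x⟫ ^ k * f x = ∑ ab ∈ antidiagonal k,
      (k.choose ab.1 * ∫ x, x 0 ^ ab.1 * x 1 ^ ab.2 * f x) * ξ 0 ^ ab.1 * ξ 1 ^ ab.2 := by
  have hint (a b : ℕ) : Integrable fun x : EuclideanSpace ℝ (Fin 2) => x 0 ^ a * x 1 ^ b * f x :=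
    (((EuclideanSpace.proj 0).continuous.pow a).mul ((EuclideanSpace.proj 1).continuous.pow b)
      |>.mul hf).integrable_of_hasCompactSupport hsupp.mul_left
  calc ∫ x, ⟪ξ, x⟫ ^ k * f x
      = ∫ x, ∑ ab ∈ antidiagonal k,
          k.choose ab.1 * ξ 0 ^ ab.1 * ξ 1 ^ ab.2 * (x 0 ^ ab.1 * x 1 ^ ab.2 * f x) := by
        congr with x
        rw [EuclideanSpace.inner_eq_star_dotProduct]
        simp only [dotProduct, Fin.sum_univ_two, star_trivial]
        rw [(Commute.all _ _).add_pow', sum_mul]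
        refine sum_congr rfl fun ab _ => ?_
        rw [nsmul_eq_mul]
        ring
    _ = _ := by
        rw [integral_finsetSum _ fun ab _ => (hint _ _).const_mul _]
        refine sum_congr rfl fun ab _ => ?_
        rw [integral_const_mul]
        ring

theorem finite_sphere_inter_span_singleton {E : Type*} [NormedAddCommGroup E] [NormedSpace ℝ E]
    (v : E) : (sphere (0 : E) 1 ∩ (ℝ ∙ v)).Finite := by
  refine (Set.toFinite {‖v‖⁻¹ • v, -(‖v‖⁻¹ • v)}).subset ?_
  rintro x ⟨hx, hxv⟩
  obtain ⟨c, rfl⟩ := Submodule.mem_span_singleton.1 hxv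
  have hc : |c| * ‖v‖ = 1 := by simpa [norm_smul] using hx
  rcases abs_eq_abs.1 (show |c| = |‖v‖⁻¹| by rw [abs_inv, abs_norm, eq_inv_of_mul_eq_one_left hc])
    with h | h <;> simp [h]

section BinaryForms

open Polynomial

theorem sum_antidiagonal_eq_eval_div_mul_pow {K : Type*} [Field K] (c : ℕ × ℕ → K) (k : ℕ)
    (a : K) {b : K} (hb : b ≠ 0) :
    ∑ ab ∈ antidiagonal k, c ab * a ^ ab.1 * b ^ ab.2
      = (∑ ab ∈ antidiagonal k, monomial ab.1 (c ab)).eval (a / b) * b ^ k := by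
  rw [eval_finsetSum, sum_mul]
  refine sum_congr rfl fun ab hab => ?_
  rw [eval_monomial, ← HasAntidiagonal.mem_antidiagonal.1 hab, pow_add, div_pow]
  field_simp

theorem coeff_sum_antidiagonal_monomial {R : Type*} [Semiring R] (c : ℕ × ℕ → R) {k : ℕ}
    {ab : ℕ × ℕ} (hab : ab ∈ antidiagonal k) :
    (∑ ij ∈ antidiagonal k, monomial ij.1 (c ij)).coeff ab.1 = c ab := by
  rw [finsetSum_coeff, sum_eq_single ab]
  · simp
  · intro ij hij hne
    rw [coeff_monomial, if_neg]
    contrapose! hne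
    rw [HasAntidiagonal.mem_antidiagonal] at hab hij
    ext <;> omega
  · exact fun h => absurd hab h

theorem sum_antidiagonal_monomial_eq_zero {S : Set (EuclideanSpace ℝ (Fin 2))}
    (hS : S ⊆ sphere 0 1) (hSinf : S.Infinite) {c : ℕ × ℕ → ℝ} {k : ℕ}
    (h : ∀ ξ ∈ S, ∑ ab ∈ antidiagonal k, c ab * ξ 0 ^ ab.1 * ξ 1 ^ ab.2 = 0) :
    ∑ ab ∈ antidiagonal k, monomial ab.1 (c ab) = 0 := by
  set P := ∑ ab ∈ antidiagonal k, monomial ab.1 (c ab)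
  by_contra hP
  -- every `ξ ∈ S` lies on one of these finitely many lines
  have hlines : (insert (EuclideanSpace.single 0 1)
      ((fun t => !₂[t, 1]) '' {t | P.IsRoot t})).Finite :=
    ((finite_setOfPred_isRoot hP).image _).insert _
  refine hSinf ((hlines.biUnion fun v _ => finite_sphere_inter_span_singleton v).subset ?_)
  intro ξ hξ
  rw [Set.mem_iUnion₂]
  by_cases hξ1 : ξ 1 = 0
  · refine ⟨_, Set.mem_insert _ _, hS hξ, Submodule.mem_span_singleton.2 ⟨ξ 0, ?_⟩⟩
    ext i; fin_cases i <;> simp [hξ1]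
  · refine ⟨_, Set.mem_insert_of_mem _ ⟨ξ 0 / ξ 1, ?_, rfl⟩, hS hξ,
      Submodule.mem_span_singleton.2 ⟨ξ 1, ?_⟩⟩
    · have hξS := h ξ hξ
      rw [sum_antidiagonal_eq_eval_div_mul_pow c k _ hξ1] at hξS
      exact (mul_eq_zero.1 hξS).resolve_right (pow_ne_zero _ hξ1)
    · ext i; fin_cases i <;> simp [mul_div_cancel₀ _ hξ1]

theorem eq_zero_of_forall_sum_antidiagonal_eq_zero {S : Set (EuclideanSpace ℝ (Fin 2))}
    (hS : S ⊆ sphere 0 1) (hSinf : S.Infinite) {c : ℕ × ℕ → ℝ} {k : ℕ}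
    (h : ∀ ξ ∈ S, ∑ ab ∈ antidiagonal k, c ab * ξ 0 ^ ab.1 * ξ 1 ^ ab.2 = 0) :
    ∀ ab ∈ antidiagonal k, c ab = 0 := fun ab hab => by
  rw [← coeff_sum_antidiagonal_monomial c hab, sum_antidiagonal_monomial_eq_zero hS hSinf h,
    coeff_zero]

end BinaryForms

theorem eq_zero_of_integral_sq_nonpos {X : Type*} [TopologicalSpace X] [MeasurableSpace X]
    [OpensMeasurableSpace X] {μ : Measure X} [IsFiniteMeasureOnCompacts μ] [μ.IsOpenPosMeasure]
    {f : X → ℝ} (hf : Continuous f) (hsupp : HasCompactSupport f)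
    (h : ∫ x, f x ^ 2 ∂μ ≤ 0) : f = 0 := by
  have hsq_supp : HasCompactSupport fun y => f y ^ 2 :=
    hsupp.comp_left (g := fun t : ℝ => t ^ 2) (zero_pow two_ne_zero)
  funext x
  by_contra hx
  change f x ≠ 0 at hx
  exact h.not_gt ((hf.pow 2).integral_pos_of_hasCompactSupport_nonneg_nonzero hsq_supp
    (fun y => sq_nonneg (f y)) (pow_ne_zero 2 hx))

open Filter Topology in
theorem eq_zero_of_forall_integral_mul_eq_zero {X : Type*} [TopologicalSpace X]
    [MeasurableSpace X] [OpensMeasurableSpace X] {μ : Measure X} [IsFiniteMeasureOnCompacts μ]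
    [μ.IsOpenPosMeasure] {f : X → ℝ} (hf : Continuous f) (hsupp : HasCompactSupport f)
    {A : Subalgebra ℝ C(X, ℝ)} (hA : A.SeparatesPoints) (h : ∀ g ∈ A, ∫ x, g x * f x ∂μ = 0) :
    f = 0 := by
  have hsmall : ∀ ε > 0, ∫ x, f x ^ 2 ∂μ ≤ ε * ∫ x, |f x| ∂μ := by
    intro ε hε
    obtain ⟨g, hgA, hg⟩ :=
      ContinuousMap.exists_mem_subalgebra_near_continuous_of_isCompact_of_separatesPoints hA
        ⟨f, hf⟩ hsupp hε
    have hgf : Integrable (fun x => g x * f x) μ :=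
      (g.continuous.mul hf).integrable_of_hasCompactSupport hsupp.mul_left
    have hfgf : Integrable (fun x => (f x - g x) * f x) μ :=
      ((hf.sub g.continuous).mul hf).integrable_of_hasCompactSupport hsupp.mul_left
    have hpointwise (x : X) : |(f x - g x) * f x| ≤ ε * |f x| := by
      by_cases hx : x ∈ tsupport f
      · rw [abs_mul, abs_sub_comm]
        exact mul_le_mul_of_nonneg_right (hg x hx).le (abs_nonneg _)
      · simp [image_eq_zero_of_notMem_tsupport hx]
    calc ∫ x, f x ^ 2 ∂μ = ∫ x, (f x - g x) * f x ∂μ := by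
          rw [← add_zero (∫ x, (f x - g x) * f x ∂μ), ← h g hgA, ← integral_add hfgf hgf]
          congr with x
          ring
      _ ≤ ∫ x, |(f x - g x) * f x| ∂μ := integral_mono hfgf hfgf.abs fun x => le_abs_self _
      _ ≤ ∫ x, ε * |f x| ∂μ :=
          integral_mono hfgf.abs ((hf.integrable_of_hasCompactSupport hsupp).abs.const_mul ε)
            hpointwise
      _ = ε * ∫ x, |f x| ∂μ := integral_const_mul _ _
  have hlim : Tendsto (fun ε : ℝ => ε * ∫ x, |f x| ∂μ) (𝓝[>] 0) (𝓝 0) := by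
    simpa using ((tendsto_id (x := 𝓝 (0 : ℝ))).mul_const (∫ x, |f x| ∂μ)).mono_left
      nhdsWithin_le_nhds
  exact eq_zero_of_integral_sq_nonpos hf hsupp
    (ge_of_tendsto hlim (eventually_nhdsWithin_of_forall hsmall))

theorem eq_zero_of_forall_integral_monomial_mul_eq_zero {ι : Type*} [Fintype ι]
    {f : EuclideanSpace ℝ ι → ℝ} (hf : Continuous f) (hsupp : HasCompactSupport f)
    (h : ∀ n : ι →₀ ℕ, ∫ x, (∏ i, x i ^ n i) * f x = 0) : f = 0 := by
  let coord : ι → C(EuclideanSpace ℝ ι, ℝ) := fun i => ⟨fun x => x i, by fun_prop⟩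
  refine eq_zero_of_forall_integral_mul_eq_zero (μ := volume) hf hsupp
    (A := (MvPolynomial.aeval coord).range) ?_ ?_
  · intro x y hxy
    obtain ⟨i, hi⟩ : ∃ i, x i ≠ y i := by
      contrapose! hxy
      exact PiLp.ext hxy
    exact ⟨coord i, ⟨coord i, ⟨MvPolynomial.X i, MvPolynomial.aeval_X _ _⟩, rfl⟩, hi⟩
  · have hint (g : C(EuclideanSpace ℝ ι, ℝ)) : Integrable fun x => g x * f x :=
      (g.continuous.mul hf).integrable_of_hasCompactSupport hsupp.mul_left
    rintro _ ⟨p, rfl⟩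
    induction p using MvPolynomial.induction_on' with
    | monomial n a =>
      simp [MvPolynomial.aeval_monomial, coord, Finsupp.prod_fintype, mul_assoc,
        integral_const_mul, h n]
    | add p q hp hq =>
      simp only [map_add, ContinuousMap.add_apply, add_mul]
      rw [integral_add (hint _) (hint _), hp, hq, add_zero]

theorem smith_solomon_wagner_uniqueness
    (f : EuclideanSpace ℝ (Fin 2) → ℝ) (hf : Continuous f) (hsupp : HasCompactSupport f)
    (S : Set (EuclideanSpace ℝ (Fin 2))) (hS : S ⊆ sphere (0 : EuclideanSpace ℝ (Fin 2)) 1)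
    (hSinf : S.Infinite)
    (h : ∀ X : ℝ, ∀ ξ ∈ S, radonTransform f X ξ = 0) :
    ∀ x : EuclideanSpace ℝ (Fin 2), f x = 0 := by
  have hmoment (a b : ℕ) : ∫ x, x 0 ^ a * x 1 ^ b * f x = 0 := by
    have hform : ∀ ξ ∈ S, ∑ ab ∈ antidiagonal (a + b),
        ((a + b).choose ab.1 * ∫ x, x 0 ^ ab.1 * x 1 ^ ab.2 * f x) * ξ 0 ^ ab.1 * ξ 1 ^ ab.2
          = 0 := by
      intro ξ hξ
      rw [← integral_inner_pow_mul_eq_sum_antidiagonal hf hsupp,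
        integral_comp_inner_mul_eq_integral_mul_radonTransform hf hsupp
          (mem_sphere_zero_iff_norm.1 (hS hξ)) (φ := fun s => s ^ (a + b)) (continuous_pow _)]
      simp [h _ ξ hξ]
    have hc := eq_zero_of_forall_sum_antidiagonal_eq_zero hS hSinf hform (a, b) (by simp)
    exact (mul_eq_zero.1 hc).resolve_left (Nat.cast_ne_zero.2 (Nat.choose_pos (by omega)).ne')
  have hf0 := eq_zero_of_forall_integral_monomial_mul_eq_zero hf hsupp fun n => by
    simpa [Fin.prod_univ_two] using hmoment (n 0) (n 1)
  exact congrFun hf0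
end
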